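/- arXiv:1011.0648 — 3 statements merged into one kernel-verified Lean document; each statement's English description precedes it below -/
import Mathlib

section
/- Let A be a bialgebra with sub-Hopf algebra H = K[Γ], and γ : A ⊗ A → K an H-bilinear, H-balanced linear map. For monomials X = x_1^{n_1}…x_θ^{n_θ} set χ_X = χ_1^{n_1}⋯χ_θ^{n_θ}. Then for grouplikes g,h,l ∈ Γ, the cocycle identity γ(Y_{(1)} ⊗ Z_{(1)})γ(X ⊗ Y_{(2)}Z_{(2)}) = γ(X_{(1)} ⊗ Y_{(1)})γ(X_{(2)}Y_{(2)} ⊗ Z) holds for the triple (gX, hY, lZ) if and only if it holds for (X, Y, Z). -/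
/-!
Multiplication by a grouplike element, on either side, is a coalgebra endomorphism of `A`, so
precomposing either side of the cocycle identity (a convolution product on `A ⊗ A ⊗ A`) with it
precomposes each convolution factor. By `H`-bilinearity and `H`-balancedness, both sides are then
unchanged under `x ↦ g x` and `z ↦ z l`, and `h` may be moved from the front of `y` to the back
of `x`. Commuting `h` past `X` and `l` past `Z` costs the scalars `χX(h)` and `χZ(l)`, so both sides
on `(gX, hY, lZ)` are the same nonzero multiple `χX(h)⁻¹ χZ(l)` of those on `(X, Y, Z)`.
-/

set_option autoImplicit false
open TensorProduct Coalgebra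
universe u
variable {K A : Type u} [Field K] [CharZero K] [Ring A] [Bialgebra K A]

/-- Convolution product of two `K`-valued linear maps on a coalgebra. -/
noncomputable def conv {C : Type u} [AddCommGroup C] [Module K C] [Coalgebra K C]
    (f g : C →ₗ[K] K) : C →ₗ[K] K :=
  (LinearMap.mul' K K) ∘ₗ (TensorProduct.map f g) ∘ₗ Coalgebra.comul

/-- Convolution product of two `A`-valued linear maps on the coalgebra `A ⊗ A`. -/
noncomputable def convMap (f g : A ⊗[K] A →ₗ[K] A) : A ⊗[K] A →ₗ[K] A :=
  (LinearMap.mul' K A) ∘ₗ (TensorProduct.map f g) ∘ₗ Coalgebra.comul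

/-- `x ⊗ y ⊗ z ↦ γ(y₍₁₎ ⊗ z₍₁₎) γ(x ⊗ y₍₂₎z₍₂₎)`: the left side of the 2-cocycle
identity, for the multiplication `m`. -/
noncomputable def cocycleL (m : A ⊗[K] A →ₗ[K] A) (γ : A ⊗[K] A →ₗ[K] K) :
    A ⊗[K] (A ⊗[K] A) →ₗ[K] K :=
  conv ((LinearMap.mul' K K) ∘ₗ TensorProduct.map Coalgebra.counit γ)
    (γ ∘ₗ TensorProduct.map LinearMap.id m)

/-- `x ⊗ y ⊗ z ↦ γ(x₍₁₎ ⊗ y₍₁₎) γ(x₍₂₎y₍₂₎ ⊗ z)`: the right side of the 2-cocycle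
identity, for the multiplication `m`. -/
noncomputable def cocycleR (m : A ⊗[K] A →ₗ[K] A) (γ : A ⊗[K] A →ₗ[K] K) :
    A ⊗[K] (A ⊗[K] A) →ₗ[K] K :=
  conv ((LinearMap.mul' K K) ∘ₗ TensorProduct.map γ Coalgebra.counit
      ∘ₗ (TensorProduct.assoc K A A A).symm.toLinearMap)
    (γ ∘ₗ TensorProduct.map m LinearMap.id ∘ₗ (TensorProduct.assoc K A A A).symm.toLinearMap)

/-- A normalized (unital) 2-cocycle with respect to a multiplication `m` on `A`. -/
noncomputable def IsNormalizedCocycleWith (m : A ⊗[K] A →ₗ[K] A)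
    (γ : A ⊗[K] A →ₗ[K] K) : Prop :=
  cocycleL m γ = cocycleR m γ ∧
    (∀ a : A, γ (a ⊗ₜ[K] 1) = Coalgebra.counit a ∧ γ ((1 : A) ⊗ₜ[K] a) = Coalgebra.counit a)

/-- Convolution invertibility of a `K`-valued map on `A ⊗ A`. -/
noncomputable def IsConvInvertible (γ : A ⊗[K] A →ₗ[K] K) : Prop :=
  ∃ γ' : A ⊗[K] A →ₗ[K] K, conv γ γ' = Coalgebra.counit ∧ conv γ' γ = Coalgebra.counit

/-- The twisted multiplication `γ ∗ m ∗ γ'` (where `γ'` is the convolution inverse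
of `γ`). -/
noncomputable def mulTwist (m : A ⊗[K] A →ₗ[K] A) (γ γ' : A ⊗[K] A →ₗ[K] K) :
    A ⊗[K] A →ₗ[K] A :=
  convMap (convMap ((Algebra.linearMap K A) ∘ₗ γ) m) ((Algebra.linearMap K A) ∘ₗ γ')

namespace IsGroupLikeElem

variable {R B : Type*} [CommSemiring R] [Semiring B] [Bialgebra R B] {a : B}

lemma map_mulLeft_mulLeft (ha : IsGroupLikeElem R a) (t : B ⊗[R] B) :
    TensorProduct.map (LinearMap.mulLeft R a) (LinearMap.mulLeft R a) t = comul a * t := by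
  rw [ha.comul_eq_tmul_self]
  induction t using TensorProduct.induction_on with
  | zero => simp
  | tmul x y => simp [Algebra.TensorProduct.tmul_mul_tmul]
  | add x y hx hy => simp [hx, hy, mul_add]

lemma map_mulRight_mulRight (ha : IsGroupLikeElem R a) (t : B ⊗[R] B) :
    TensorProduct.map (LinearMap.mulRight R a) (LinearMap.mulRight R a) t = t * comul a := by
  rw [ha.comul_eq_tmul_self]
  induction t using TensorProduct.induction_on with
  | zero => simp
  | tmul x y => simp [Algebra.TensorProduct.tmul_mul_tmul]
  | add x y hx hy => simp [hx, hy, add_mul]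

noncomputable def mulLeftCoalgHom (ha : IsGroupLikeElem R a) : B →ₗc[R] B where
  toLinearMap := LinearMap.mulLeft R a
  counit_comp := by ext x; simp [ha.counit_eq_one]
  map_comp_comul := by ext x; simp [ha.map_mulLeft_mulLeft]

noncomputable def mulRightCoalgHom (ha : IsGroupLikeElem R a) : B →ₗc[R] B where
  toLinearMap := LinearMap.mulRight R a
  counit_comp := by ext x; simp [ha.counit_eq_one]
  map_comp_comul := by ext x; simp [ha.map_mulRight_mulRight]

@[simp] lemma mulLeftCoalgHom_apply (ha : IsGroupLikeElem R a) (x : B) :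
    ha.mulLeftCoalgHom x = a * x := rfl

@[simp] lemma mulRightCoalgHom_apply (ha : IsGroupLikeElem R a) (x : B) :
    ha.mulRightCoalgHom x = x * a := rfl

end IsGroupLikeElem

lemma mul_apply_tmul_of_invariant {Γ S M : Type*} [CommSemiring S] [Semiring M] [Module S M]
    (e : Γ → M) (c : M ⊗[S] (M ⊗[S] M) →ₗ[S] S)
    (hleft : ∀ u x y z, c ((e u * x) ⊗ₜ (y ⊗ₜ z)) = c (x ⊗ₜ (y ⊗ₜ z)))
    (hmiddle : ∀ u x y z, c (x ⊗ₜ ((e u * y) ⊗ₜ z)) = c ((x * e u) ⊗ₜ (y ⊗ₜ z)))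
    (hright : ∀ u x y z, c (x ⊗ₜ (y ⊗ₜ (z * e u))) = c (x ⊗ₜ (y ⊗ₜ z)))
    {X Z : M} {χX χZ : Γ → S} (hX : ∀ u, e u * X = χX u • (X * e u))
    (hZ : ∀ u, e u * Z = χZ u • (Z * e u)) (g h l : Γ) (Y : M) :
    χX h * c ((e g * X) ⊗ₜ ((e h * Y) ⊗ₜ (e l * Z))) = χZ l * c (X ⊗ₜ (Y ⊗ₜ Z)) := by
  calc χX h * c ((e g * X) ⊗ₜ ((e h * Y) ⊗ₜ (e l * Z)))
      = χX h * (χZ l * c ((X * e h) ⊗ₜ (Y ⊗ₜ Z))) := by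
        rw [hleft, hmiddle, hZ, tmul_smul, tmul_smul, map_smul, hright, smul_eq_mul]
    _ = χZ l * c ((e h * X) ⊗ₜ (Y ⊗ₜ Z)) := by
        rw [hX, ← smul_tmul', map_smul, smul_eq_mul, mul_left_comm]
    _ = χZ l * c (X ⊗ₜ (Y ⊗ₜ Z)) := by rw [hleft]

section Cocycle

variable {R B : Type u} [Field R] [Ring B] [Bialgebra R B]

lemma conv_comp_coalgHom {C D : Type u} [AddCommGroup C] [Module R C] [Coalgebra R C]
    [AddCommGroup D] [Module R D] [Coalgebra R D] (f g : C →ₗ[R] R) (T : D →ₗc[R] C) :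
    conv f g ∘ₗ T.toLinearMap = conv (f ∘ₗ T.toLinearMap) (g ∘ₗ T.toLinearMap) :=
  LinearMap.convMul_comp_coalgHom_distrib (WithConv.toConv f) (WithConv.toConv g) T

variable {γ : B ⊗[R] B →ₗ[R] R} {a : B}

lemma cocycleL_mul_left (ha : IsGroupLikeElem R a) (hγ : ∀ x y, γ ((a * x) ⊗ₜ y) = γ (x ⊗ₜ y))
    (x y z : B) :
    cocycleL (LinearMap.mul' R B) γ ((a * x) ⊗ₜ (y ⊗ₜ z)) =
      cocycleL (LinearMap.mul' R B) γ (x ⊗ₜ (y ⊗ₜ z)) := by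
  let T := Coalgebra.TensorProduct.map ha.mulLeftCoalgHom (CoalgHom.id R (B ⊗[R] B))
  have hT : cocycleL (LinearMap.mul' R B) γ ∘ₗ T.toLinearMap = cocycleL (LinearMap.mul' R B) γ := by
    rw [cocycleL, conv_comp_coalgHom]
    congr 1 <;> ext <;> simp [T, hγ, ha.counit_eq_one]
  exact LinearMap.congr_fun hT (x ⊗ₜ (y ⊗ₜ z))

lemma cocycleR_mul_left (ha : IsGroupLikeElem R a) (hγ : ∀ x y, γ ((a * x) ⊗ₜ y) = γ (x ⊗ₜ y))
    (x y z : B) :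
    cocycleR (LinearMap.mul' R B) γ ((a * x) ⊗ₜ (y ⊗ₜ z)) =
      cocycleR (LinearMap.mul' R B) γ (x ⊗ₜ (y ⊗ₜ z)) := by
  let T := Coalgebra.TensorProduct.map ha.mulLeftCoalgHom (CoalgHom.id R (B ⊗[R] B))
  have hT : cocycleR (LinearMap.mul' R B) γ ∘ₗ T.toLinearMap = cocycleR (LinearMap.mul' R B) γ := by
    rw [cocycleR, conv_comp_coalgHom]
    congr 1 <;> ext <;> simp [T, hγ, mul_assoc]
  exact LinearMap.congr_fun hT (x ⊗ₜ (y ⊗ₜ z))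

lemma cocycleL_mul_right (ha : IsGroupLikeElem R a) (hγ : ∀ x y, γ (x ⊗ₜ (y * a)) = γ (x ⊗ₜ y))
    (x y z : B) :
    cocycleL (LinearMap.mul' R B) γ (x ⊗ₜ (y ⊗ₜ (z * a))) =
      cocycleL (LinearMap.mul' R B) γ (x ⊗ₜ (y ⊗ₜ z)) := by
  let T := Coalgebra.TensorProduct.map (CoalgHom.id R B)
    (Coalgebra.TensorProduct.map (CoalgHom.id R B) ha.mulRightCoalgHom)
  have hT : cocycleL (LinearMap.mul' R B) γ ∘ₗ T.toLinearMap = cocycleL (LinearMap.mul' R B) γ := by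
    rw [cocycleL, conv_comp_coalgHom]
    congr 1 <;> ext <;> simp [T, hγ, ← mul_assoc]
  exact LinearMap.congr_fun hT (x ⊗ₜ (y ⊗ₜ z))

lemma cocycleR_mul_right (ha : IsGroupLikeElem R a) (hγ : ∀ x y, γ (x ⊗ₜ (y * a)) = γ (x ⊗ₜ y))
    (x y z : B) :
    cocycleR (LinearMap.mul' R B) γ (x ⊗ₜ (y ⊗ₜ (z * a))) =
      cocycleR (LinearMap.mul' R B) γ (x ⊗ₜ (y ⊗ₜ z)) := by
  let T := Coalgebra.TensorProduct.map (CoalgHom.id R B)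
    (Coalgebra.TensorProduct.map (CoalgHom.id R B) ha.mulRightCoalgHom)
  have hT : cocycleR (LinearMap.mul' R B) γ ∘ₗ T.toLinearMap = cocycleR (LinearMap.mul' R B) γ := by
    rw [cocycleR, conv_comp_coalgHom]
    congr 1 <;> ext <;> simp [T, hγ, ha.counit_eq_one]
  exact LinearMap.congr_fun hT (x ⊗ₜ (y ⊗ₜ z))

lemma cocycleL_mul_middle (ha : IsGroupLikeElem R a) (hγ : ∀ x y, γ ((a * x) ⊗ₜ y) = γ (x ⊗ₜ y))
    (hbal : ∀ x y, γ ((x * a) ⊗ₜ y) = γ (x ⊗ₜ (a * y))) (x y z : B) :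
    cocycleL (LinearMap.mul' R B) γ (x ⊗ₜ ((a * y) ⊗ₜ z)) =
      cocycleL (LinearMap.mul' R B) γ ((x * a) ⊗ₜ (y ⊗ₜ z)) := by
  let T := Coalgebra.TensorProduct.map (CoalgHom.id R B)
    (Coalgebra.TensorProduct.map ha.mulLeftCoalgHom (CoalgHom.id R B))
  let T' := Coalgebra.TensorProduct.map ha.mulRightCoalgHom (CoalgHom.id R (B ⊗[R] B))
  have hT : cocycleL (LinearMap.mul' R B) γ ∘ₗ T.toLinearMap =
      cocycleL (LinearMap.mul' R B) γ ∘ₗ T'.toLinearMap := by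
    rw [cocycleL, conv_comp_coalgHom, conv_comp_coalgHom]
    congr 1 <;> ext <;> simp [T, T', hγ, hbal, ha.counit_eq_one, mul_assoc]
  exact LinearMap.congr_fun hT (x ⊗ₜ (y ⊗ₜ z))

lemma cocycleR_mul_middle (ha : IsGroupLikeElem R a)
    (hbal : ∀ x y, γ ((x * a) ⊗ₜ y) = γ (x ⊗ₜ (a * y))) (x y z : B) :
    cocycleR (LinearMap.mul' R B) γ (x ⊗ₜ ((a * y) ⊗ₜ z)) =
      cocycleR (LinearMap.mul' R B) γ ((x * a) ⊗ₜ (y ⊗ₜ z)) := by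
  let T := Coalgebra.TensorProduct.map (CoalgHom.id R B)
    (Coalgebra.TensorProduct.map ha.mulLeftCoalgHom (CoalgHom.id R B))
  let T' := Coalgebra.TensorProduct.map ha.mulRightCoalgHom (CoalgHom.id R (B ⊗[R] B))
  have hT : cocycleR (LinearMap.mul' R B) γ ∘ₗ T.toLinearMap =
      cocycleR (LinearMap.mul' R B) γ ∘ₗ T'.toLinearMap := by
    rw [cocycleR, conv_comp_coalgHom, conv_comp_coalgHom]
    congr 1 <;> ext <;> simp [T, T', hbal, mul_assoc]
  exact LinearMap.congr_fun hT (x ⊗ₜ (y ⊗ₜ z))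

end Cocycle

theorem stmt6_general {Γ : Type u} [CommGroup Γ] (grp : Γ →* A)
    (hgrp : ∀ u : Γ, Coalgebra.comul (R := K) (grp u) = grp u ⊗ₜ[K] grp u ∧
      Coalgebra.counit (R := K) (grp u) = 1)
    (γ : A ⊗[K] A →ₗ[K] K)
    (hbil : ∀ (u u' : Γ) (a b : A), γ ((grp u * a) ⊗ₜ[K] (b * grp u')) = γ (a ⊗ₜ[K] b))
    (hbal : ∀ (u : Γ) (a b : A), γ ((a * grp u) ⊗ₜ[K] b) = γ (a ⊗ₜ[K] (grp u * b)))
    (X Y Z : A) (χX χZ : Γ →* Kˣ)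
    (hX : ∀ u : Γ, grp u * X = (χX u : K) • (X * grp u))
    (hZ : ∀ u : Γ, grp u * Z = (χZ u : K) • (Z * grp u))
    (g h l : Γ) :
    (cocycleL (LinearMap.mul' K A) γ
        ((grp g * X) ⊗ₜ[K] ((grp h * Y) ⊗ₜ[K] (grp l * Z))) =
      cocycleR (LinearMap.mul' K A) γ
        ((grp g * X) ⊗ₜ[K] ((grp h * Y) ⊗ₜ[K] (grp l * Z)))) ↔
    (cocycleL (LinearMap.mul' K A) γ (X ⊗ₜ[K] (Y ⊗ₜ[K] Z)) =
      cocycleR (LinearMap.mul' K A) γ (X ⊗ₜ[K] (Y ⊗ₜ[K] Z))) := by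
  have hG (u : Γ) : IsGroupLikeElem K (grp u) := ⟨(hgrp u).2, (hgrp u).1⟩
  have hleft (u : Γ) (a b : A) : γ ((grp u * a) ⊗ₜ b) = γ (a ⊗ₜ b) := by
    simpa using hbil u 1 a b
  have hright (u : Γ) (a b : A) : γ (a ⊗ₜ (b * grp u)) = γ (a ⊗ₜ b) := by
    simpa using hbil 1 u a b
  have hL := mul_apply_tmul_of_invariant grp (cocycleL (LinearMap.mul' K A) γ)
    (fun u => cocycleL_mul_left (hG u) (hleft u))
    (fun u => cocycleL_mul_middle (hG u) (hleft u) (hbal u))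
    (fun u => cocycleL_mul_right (hG u) (hright u)) hX hZ g h l Y
  have hR := mul_apply_tmul_of_invariant grp (cocycleR (LinearMap.mul' K A) γ)
    (fun u => cocycleR_mul_left (hG u) (hleft u))
    (fun u => cocycleR_mul_middle (hG u) (hbal u))
    (fun u => cocycleR_mul_right (hG u) (hright u)) hX hZ g h l Y
  rw [← mul_right_inj' (χX h).ne_zero, hL, hR, mul_right_inj' (χZ l).ne_zero]

/-- Let `A` be a bialgebra containing the group algebra of `Γ` via a
map `grp` whose values are grouplike, and `γ : A ⊗ A → K` an `H`-bilinear, `H`-balanced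
linear map.  Let `X, Y, Z ∈ A` be monomials, with associated characters
`χX, χY, χZ : Γ → Kˣ` (so `grp h * X = χX(h) • (X * grp h)`, etc.).  Then for
grouplikes `g, h, l ∈ Γ`, the 2-cocycle identity
`γ(Y₍₁₎ ⊗ Z₍₁₎)γ(X ⊗ Y₍₂₎Z₍₂₎) = γ(X₍₁₎ ⊗ Y₍₁₎)γ(X₍₂₎Y₍₂₎ ⊗ Z)`
holds on the triple `(gX, hY, lZ)` if and only if it holds on `(X, Y, Z)`. -/
theorem stmt6 {Γ : Type u} [CommGroup Γ] [Fintype Γ] (grp : Γ →* A)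
    (hgrp : ∀ u : Γ, Coalgebra.comul (R := K) (grp u) = grp u ⊗ₜ[K] grp u ∧
      Coalgebra.counit (R := K) (grp u) = 1)
    (γ : A ⊗[K] A →ₗ[K] K)
    (hbil : ∀ (u u' : Γ) (a b : A), γ ((grp u * a) ⊗ₜ[K] (b * grp u')) = γ (a ⊗ₜ[K] b))
    (hbal : ∀ (u : Γ) (a b : A), γ ((a * grp u) ⊗ₜ[K] b) = γ (a ⊗ₜ[K] (grp u * b)))
    (X Y Z : A) (χX χY χZ : Γ →* Kˣ)
    (hX : ∀ u : Γ, grp u * X = (χX u : K) • (X * grp u))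
    (hY : ∀ u : Γ, grp u * Y = (χY u : K) • (Y * grp u))
    (hZ : ∀ u : Γ, grp u * Z = (χZ u : K) • (Z * grp u))
    (g h l : Γ) :
    (cocycleL (LinearMap.mul' K A) γ
        ((grp g * X) ⊗ₜ[K] ((grp h * Y) ⊗ₜ[K] (grp l * Z))) =
      cocycleR (LinearMap.mul' K A) γ
        ((grp g * X) ⊗ₜ[K] ((grp h * Y) ⊗ₜ[K] (grp l * Z)))) ↔
    (cocycleL (LinearMap.mul' K A) γ (X ⊗ₜ[K] (Y ⊗ₜ[K] Z)) =
      cocycleR (LinearMap.mul' K A) γ (X ⊗ₜ[K] (Y ⊗ₜ[K] Z))) :=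
  stmt6_general grp hgrp γ hbil hbal X Y Z χX χZ hX hZ g h l
end

section
/- Let A be a bialgebra over K, β a normalized 2-cocycle on A, and γ a normalized 2-cocycle on the cocycle twist A^β (same coalgebra, multiplication twisted by β). Then the convolution product γ ∗ β is a normalized 2-cocycle on A. -/
set_option autoImplicit false
open TensorProduct Coalgebra
universe u
variable {K A : Type u} [Field K] [CharZero K] [Ring A] [Bialgebra K A]

/-!
Work in the convolution monoid of `K`-valued maps on `A ⊗ (A ⊗ A)`. Precomposition with the
coalgebra maps `ε ⊗ id`, `id ⊗ m`, `id ⊗ ε` and `m ⊗ id` (up to reassociation), call it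
`P`, `L`, `Q`, `R`, is multiplicative, and the cocycle identity for `u` reads
`P u * L u = Q u * R u`. Twisting `m` by `β` conjugates the middle factors: the cocycle identity
for `γ` on `A^β` reads `P γ * (P β * L γ * P β⁻¹) = Q γ * (Q β * R γ * Q β⁻¹)`. Multiplying on the
right by the cocycle identity `P β * L β = Q β * R β` cancels `P β⁻¹ * P β` and `Q β⁻¹ * Q β`,
which leaves the cocycle identity for `γ * β`. Normalization is preserved because precomposition
with `a ↦ a ⊗ 1` and `a ↦ 1 ⊗ a` is multiplicative too.
-/

open WithConv

namespace CoalgHom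

variable {R C D B : Type*} [CommSemiring R] [AddCommMonoid C] [Module R C] [Coalgebra R C]
  [AddCommMonoid D] [Module R D] [Coalgebra R D] [Semiring B] [Algebra R B]

noncomputable def convPrecomp (φ : C →ₗc[R] D) :
    WithConv (D →ₗ[R] B) →* WithConv (C →ₗ[R] B) where
  toFun f := toConv (f.ofConv ∘ₗ φ.toLinearMap)
  map_one' := by ext; simp
  map_mul' f g := WithConv.ext (LinearMap.convMul_comp_coalgHom_distrib f g φ)

@[simp] lemma convPrecomp_apply (φ : C →ₗc[R] D) (f : WithConv (D →ₗ[R] B)) :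
    φ.convPrecomp f = toConv (f.ofConv ∘ₗ φ.toLinearMap) := rfl

end CoalgHom

lemma TensorProduct.map_algebraLinearMap_comp {R C D B₁ B₂ : Type*} [CommSemiring R]
    [AddCommMonoid C] [Module R C] [AddCommMonoid D] [Module R D] [Semiring B₁] [Algebra R B₁]
    [Semiring B₂] [Algebra R B₂] (u : C →ₗ[R] R) (v : D →ₗ[R] R) :
    map (Algebra.linearMap R B₁ ∘ₗ u) (Algebra.linearMap R B₂ ∘ₗ v) =
      Algebra.linearMap R (B₁ ⊗[R] B₂) ∘ₗ LinearMap.mul' R R ∘ₗ map u v := by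
  ext x y
  simp [Algebra.algebraMap_eq_smul_one, TensorProduct.smul_tmul', TensorProduct.tmul_smul,
    smul_smul, Algebra.TensorProduct.one_def, mul_comm]

section ScalarTwist

variable {R C D B B₁ B₂ : Type*} [CommSemiring R] [AddCommMonoid C] [Module R C] [Coalgebra R C]
  [AddCommMonoid D] [Module R D] [Coalgebra R D] [Semiring B] [Algebra R B]
  [Semiring B₁] [Algebra R B₁] [Semiring B₂] [Algebra R B₂]

lemma comp_algebraLinearMap_convMul (f : B →ₗ[R] R) (u : C →ₗ[R] R)
    (G : WithConv (C →ₗ[R] B)) :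
    toConv (f ∘ₗ (toConv (Algebra.linearMap R B ∘ₗ u) * G).ofConv) =
      toConv u * toConv (f ∘ₗ G.ofConv) := by
  ext c; simp [(ℛ R c).convMul_apply, Algebra.algebraMap_eq_smul_one]

lemma comp_convMul_algebraLinearMap (f : B →ₗ[R] R) (u : C →ₗ[R] R)
    (G : WithConv (C →ₗ[R] B)) :
    toConv (f ∘ₗ (G * toConv (Algebra.linearMap R B ∘ₗ u)).ofConv) =
      toConv (f ∘ₗ G.ofConv) * toConv u := by
  ext c; simp [(ℛ R c).convMul_apply, Algebra.algebraMap_eq_smul_one, mul_comm]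

lemma toConv_comp_map_twist_right (f : B₁ ⊗[R] B₂ →ₗ[R] R) (H : C →ₗ[R] B₁)
    (u v : D →ₗ[R] R) (G : D →ₗ[R] B₂) :
    toConv (f ∘ₗ map H (toConv (Algebra.linearMap R B₂ ∘ₗ u) * toConv G *
        toConv (Algebra.linearMap R B₂ ∘ₗ v)).ofConv) =
      toConv (LinearMap.mul' R R ∘ₗ map counit u) * toConv (f ∘ₗ map H G) *
        toConv (LinearMap.mul' R R ∘ₗ map counit v) := by
  have hH : H = (1 * toConv H * 1 : WithConv (C →ₗ[R] B₁)).ofConv := by simp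
  conv_lhs => rw [hH]
  rw [← ofConv_toConv (map _ _), ← map_convMul_map, ← map_convMul_map]
  simp only [LinearMap.convOne_def, ofConv_toConv, TensorProduct.map_algebraLinearMap_comp,
    comp_convMul_algebraLinearMap, comp_algebraLinearMap_convMul]

lemma toConv_comp_map_twist_left (f : B₁ ⊗[R] B₂ →ₗ[R] R) (H : D →ₗ[R] B₂)
    (u v : C →ₗ[R] R) (G : C →ₗ[R] B₁) :
    toConv (f ∘ₗ map (toConv (Algebra.linearMap R B₁ ∘ₗ u) * toConv G *
        toConv (Algebra.linearMap R B₁ ∘ₗ v)).ofConv H) =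
      toConv (LinearMap.mul' R R ∘ₗ map u counit) * toConv (f ∘ₗ map G H) *
        toConv (LinearMap.mul' R R ∘ₗ map v counit) := by
  have hH : H = (1 * toConv H * 1 : WithConv (D →ₗ[R] B₂)).ofConv := by simp
  conv_lhs => rw [hH]
  rw [← ofConv_toConv (map _ _), ← map_convMul_map, ← map_convMul_map]
  simp only [LinearMap.convOne_def, ofConv_toConv, TensorProduct.map_algebraLinearMap_comp,
    comp_convMul_algebraLinearMap, comp_algebraLinearMap_convMul]

end ScalarTwist

theorem MonoidHom.cocycle_condition_mul {G M : Type*} [Monoid G] [Monoid M] (P L Q R : G →* M)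
    {β β' γ : G} (hβ : P β * L β = Q β * R β)
    (hγ : P γ * (P β * L γ * P β') = Q γ * (Q β * R γ * Q β')) (hβ' : β' * β = 1) :
    P (γ * β) * L (γ * β) = Q (γ * β) * R (γ * β) := by
  have hP : P β' * P β = 1 := by rw [← map_mul, hβ', map_one]
  have hQ : Q β' * Q β = 1 := by rw [← map_mul, hβ', map_one]
  calc P (γ * β) * L (γ * β) = P γ * (P β * L γ * P β') * (P β * L β) := by
        simp only [map_mul, mul_assoc]
        rw [← mul_assoc (P β') (P β), hP, one_mul]
    _ = Q γ * (Q β * R γ * Q β') * (Q β * R β) := by rw [hγ, hβ]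
    _ = Q (γ * β) * R (γ * β) := by
        simp only [map_mul, mul_assoc]
        rw [← mul_assoc (Q β') (Q β), hQ, one_mul]

section
omit [CharZero K]
variable (K A)

/- The maps `A ⊗ (A ⊗ A) → A ⊗ A` behind the two sides of the cocycle identity, and the
inclusions behind normalization, as coalgebra maps: precomposing with them is multiplicative
for convolution. -/

noncomputable def counitTensorId : A ⊗[K] (A ⊗[K] A) →ₗc[K] A ⊗[K] A :=
  (Coalgebra.TensorProduct.lid K (A ⊗[K] A)).toCoalgHom.comp
    (Coalgebra.TensorProduct.map (counitCoalgHom K A) (CoalgHom.id K (A ⊗[K] A)))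

noncomputable def idTensorCounit : A ⊗[K] (A ⊗[K] A) →ₗc[K] A ⊗[K] A :=
  ((Coalgebra.TensorProduct.rid K K (A ⊗[K] A)).toCoalgHom.comp
    (Coalgebra.TensorProduct.map (CoalgHom.id K (A ⊗[K] A)) (counitCoalgHom K A))).comp
    (Coalgebra.TensorProduct.assoc K K A A A).symm.toCoalgHom

noncomputable def idTensorMul : A ⊗[K] (A ⊗[K] A) →ₗc[K] A ⊗[K] A :=
  Coalgebra.TensorProduct.map (CoalgHom.id K A) (Bialgebra.mulCoalgHom K A)

noncomputable def mulTensorId : A ⊗[K] (A ⊗[K] A) →ₗc[K] A ⊗[K] A :=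
  (Coalgebra.TensorProduct.map (Bialgebra.mulCoalgHom K A) (CoalgHom.id K A)).comp
    (Coalgebra.TensorProduct.assoc K K A A A).symm.toCoalgHom

noncomputable def tmulOne : A →ₗc[K] A ⊗[K] A :=
  (Coalgebra.TensorProduct.map (CoalgHom.id K A) (Bialgebra.unitBialgHom K A : K →ₗc[K] A)).comp
    (Coalgebra.TensorProduct.rid K K A).symm.toCoalgHom

noncomputable def oneTmul : A →ₗc[K] A ⊗[K] A :=
  (Coalgebra.TensorProduct.map (Bialgebra.unitBialgHom K A : K →ₗc[K] A) (CoalgHom.id K A)).comp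
    (Coalgebra.TensorProduct.lid K A).symm.toCoalgHom

variable {K A}

lemma comp_counitTensorId (u : A ⊗[K] A →ₗ[K] K) :
    u ∘ₗ (counitTensorId K A).toLinearMap = LinearMap.mul' K K ∘ₗ map counit u := by
  ext x y z; simp [counitTensorId]

lemma comp_idTensorCounit (u : A ⊗[K] A →ₗ[K] K) :
    u ∘ₗ (idTensorCounit K A).toLinearMap =
      LinearMap.mul' K K ∘ₗ map u counit ∘ₗ (TensorProduct.assoc K A A A).symm.toLinearMap := by
  ext x y z; simp [idTensorCounit, mul_comm]

lemma tmulOne_apply (a : A) : tmulOne K A a = a ⊗ₜ 1 := by simp [tmulOne]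

lemma oneTmul_apply (a : A) : oneTmul K A a = 1 ⊗ₜ a := by simp [oneTmul]

lemma toConv_conv {C : Type u} [AddCommGroup C] [Module K C] [Coalgebra K C] (f g : C →ₗ[K] K) :
    toConv (conv f g) = toConv f * toConv g := rfl

lemma mulTwist_eq (m : A ⊗[K] A →ₗ[K] A) (β β' : A ⊗[K] A →ₗ[K] K) :
    mulTwist m β β' = (toConv (Algebra.linearMap K A ∘ₗ β) * toConv m *
      toConv (Algebra.linearMap K A ∘ₗ β')).ofConv := rfl

lemma toConv_cocycleL (m : A ⊗[K] A →ₗ[K] A) (γ : A ⊗[K] A →ₗ[K] K) :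
    toConv (cocycleL m γ) =
      toConv (LinearMap.mul' K K ∘ₗ map counit γ) * toConv (γ ∘ₗ map LinearMap.id m) := rfl

lemma toConv_cocycleR (m : A ⊗[K] A →ₗ[K] A) (γ : A ⊗[K] A →ₗ[K] K) :
    toConv (cocycleR m γ) =
      toConv (LinearMap.mul' K K ∘ₗ map γ counit ∘ₗ (TensorProduct.assoc K A A A).symm.toLinearMap) *
        toConv (γ ∘ₗ map m LinearMap.id ∘ₗ (TensorProduct.assoc K A A A).symm.toLinearMap) := rfl

lemma toConv_cocycleL_mul' (γ : A ⊗[K] A →ₗ[K] K) :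
    toConv (cocycleL (LinearMap.mul' K A) γ) =
      (counitTensorId K A).convPrecomp (toConv γ) * (idTensorMul K A).convPrecomp (toConv γ) := by
  rw [CoalgHom.convPrecomp_apply, comp_counitTensorId]; rfl

lemma toConv_cocycleR_mul' (γ : A ⊗[K] A →ₗ[K] K) :
    toConv (cocycleR (LinearMap.mul' K A) γ) =
      (idTensorCounit K A).convPrecomp (toConv γ) * (mulTensorId K A).convPrecomp (toConv γ) := by
  rw [CoalgHom.convPrecomp_apply, comp_idTensorCounit]; rfl

lemma toConv_cocycleL_mulTwist (β β' γ : A ⊗[K] A →ₗ[K] K) :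
    toConv (cocycleL (mulTwist (LinearMap.mul' K A) β β') γ) =
      (counitTensorId K A).convPrecomp (toConv γ) *
        ((counitTensorId K A).convPrecomp (toConv β) * (idTensorMul K A).convPrecomp (toConv γ) *
          (counitTensorId K A).convPrecomp (toConv β')) := by
  rw [toConv_cocycleL, mulTwist_eq, toConv_comp_map_twist_right]
  simp only [CoalgHom.convPrecomp_apply, comp_counitTensorId]
  rfl

lemma toConv_cocycleR_mulTwist (β β' γ : A ⊗[K] A →ₗ[K] K) :
    toConv (cocycleR (mulTwist (LinearMap.mul' K A) β β') γ) =
      (idTensorCounit K A).convPrecomp (toConv γ) *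
        ((idTensorCounit K A).convPrecomp (toConv β) * (mulTensorId K A).convPrecomp (toConv γ) *
          (idTensorCounit K A).convPrecomp (toConv β')) := by
  have h := congrArg (Coalgebra.TensorProduct.assoc K K A A A).symm.toCoalgHom.convPrecomp
    (toConv_comp_map_twist_left γ LinearMap.id β β' (LinearMap.mul' K A))
  rw [toConv_cocycleR, mulTwist_eq]
  simp only [map_mul, CoalgHom.convPrecomp_apply, comp_idTensorCounit] at h ⊢
  exact congrArg (HMul.hMul _) h

lemma isNormalizedCocycleWith_iff (m : A ⊗[K] A →ₗ[K] A) (γ : A ⊗[K] A →ₗ[K] K) :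
    IsNormalizedCocycleWith m γ ↔ toConv (cocycleL m γ) = toConv (cocycleR m γ) ∧
      (tmulOne K A).convPrecomp (toConv γ) = 1 ∧ (oneTmul K A).convPrecomp (toConv γ) = 1 := by
  simp [IsNormalizedCocycleWith, toConv_injective.eq_iff, forall_and,
    LinearMap.ext_iff, tmulOne_apply, oneTmul_apply]

lemma isConvInvertible_iff_isUnit (γ : A ⊗[K] A →ₗ[K] K) :
    IsConvInvertible γ ↔ IsUnit (toConv γ) := by
  simp only [IsConvInvertible, isUnit_iff_exists, WithConv.ext_iff]
  exact ⟨fun ⟨γ', h⟩ => ⟨toConv γ', h⟩, fun ⟨γ', h⟩ => ⟨γ'.ofConv, h⟩⟩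

end

/-- If `β` is a convolution-invertible normalized 2-cocycle on a
bialgebra `A` and `γ` is a convolution-invertible normalized 2-cocycle on the cocycle
twist `A^β` (same coalgebra, multiplication twisted by `β`), then the convolution
product `γ ∗ β` is a convolution-invertible normalized 2-cocycle on `A`. -/
theorem stmt7 (β β' γ : A ⊗[K] A →ₗ[K] K)
    (hβ : IsNormalizedCocycleWith (LinearMap.mul' K A) β)
    (hβinv : conv β β' = Coalgebra.counit ∧ conv β' β = Coalgebra.counit)
    (hγ : IsNormalizedCocycleWith (mulTwist (LinearMap.mul' K A) β β') γ)
    (hγinv : IsConvInvertible γ) :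
    IsNormalizedCocycleWith (LinearMap.mul' K A) (conv γ β) ∧
      IsConvInvertible (conv γ β) := by
  obtain ⟨hβc, hβ₁, hβ₂⟩ := (isNormalizedCocycleWith_iff _ _).1 hβ
  obtain ⟨hγc, hγ₁, hγ₂⟩ := (isNormalizedCocycleWith_iff _ _).1 hγ
  rw [toConv_cocycleL_mul', toConv_cocycleR_mul'] at hβc
  rw [toConv_cocycleL_mulTwist, toConv_cocycleR_mulTwist] at hγc
  have hββ' : toConv β * toConv β' = 1 := WithConv.ext hβinv.1
  have hβ'β : toConv β' * toConv β = 1 := WithConv.ext hβinv.2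
  refine ⟨(isNormalizedCocycleWith_iff _ _).2 ⟨?_, ?_, ?_⟩, ?_⟩
  · rw [toConv_cocycleL_mul', toConv_cocycleR_mul', toConv_conv]
    exact MonoidHom.cocycle_condition_mul _ _ _ _ hβc hγc hβ'β
  · rw [toConv_conv, map_mul, hγ₁, hβ₁, one_mul]
  · rw [toConv_conv, map_mul, hγ₂, hβ₂, one_mul]
  · rw [isConvInvertible_iff_isUnit, toConv_conv]
    exact ((isConvInvertible_iff_isUnit γ).1 hγinv).mul (isUnit_iff_exists.2 ⟨_, hββ', hβ'β⟩)
end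

section
/- Let V be a quantum plane with χ_1χ_2 = ε, a = a_{12} ≠ 0, r = r_1 = r_2, q = χ_1(g_1). Then γ_1 ∗ γ_{12} fails the 2-cocycle condition on the triple (x_1^{r−1}, x_2, x_1^2) whenever q ≠ 1 and a a_1 (q+1) ≠ 0: the left-hand side of the cocycle identity equals (q+1) a a_1 while the right-hand side equals q(q+1) a a_1. -/
open TensorProduct Coalgebra

set_option autoImplicit false
universe u
variable {K A : Type u} [Field K] [CharZero K] [Ring A] [Bialgebra K A]

open scoped Classical

/-- The `q`-factorial `(m)!_q`. -/
def qFact {K : Type u} [CommRing K] (q : K) : ℕ → K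
  | 0 => 1
  | n + 1 => qFact q n * (∑ i ∈ Finset.range (n + 1), q ^ i)

/-!
Both sides of the cocycle identity are expanded through the comultiplications of `x₁^{r-1}`,
`x₂` and `x₁²`. The convolution `γ = γ₁ ∗ γ₁₂` inherits from `γ₁` and `γ₁₂` the invariance
under group-likes (left on the first, right on the second factor), which removes every
group-like from the terms. Since `γ₁` only pairs `x₁`-powers of total degree `r` and `γ₁₂` only
pairs `x₂^k` with `x₁^k`, on the left only `(1 + q) γ(x₂ ⊗ x₁) γ(x₁^{r-1} ⊗ x₁) = (1 + q) a a₁`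
survives. On the right everything collapses to `γ(x₁^{r-1} x₂ ⊗ x₁²)`, and there `γ₁` meets
`x₁^{r-1} g₂ = q g₂ x₁^{r-1}`, which produces the extra factor `q`.
-/

section Convolution

variable {K A : Type u} [Field K] [Ring A] [Bialgebra K A]

noncomputable def convPairing (f g : A ⊗[K] A →ₗ[K] K) : A ⊗[K] A →ₗ[K] A ⊗[K] A →ₗ[K] K :=
  (TensorProduct.mk K _ _).compr₂ (LinearMap.mul' K K ∘ₗ TensorProduct.map f g ∘ₗ
    (TensorProduct.tensorTensorTensorComm K A A A A).toLinearMap)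

@[simp]
theorem convPairing_tmul_tmul (f g : A ⊗[K] A →ₗ[K] K) (a b c d : A) :
    convPairing f g (a ⊗ₜ b) (c ⊗ₜ d) = f (a ⊗ₜ c) * g (b ⊗ₜ d) := by
  simp [convPairing]

theorem conv_tmul (f g : A ⊗[K] A →ₗ[K] K) (u v : A) :
    conv f g (u ⊗ₜ v) = convPairing f g (comul u) (comul v) := rfl

theorem cocycleL_tmul_tmul (γ : A ⊗[K] A →ₗ[K] K) (x y z : A) :
    cocycleL (LinearMap.mul' K A) γ (x ⊗ₜ (y ⊗ₜ z)) =
      convPairing γ (γ ∘ₗ TensorProduct.mk K A A x ∘ₗ LinearMap.mul' K A) (comul y) (comul z) := by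
  let 𝓧 := ℛ K x
  let 𝓨 := ℛ K y
  let 𝓩 := ℛ K z
  have hx : x = ∑ i ∈ 𝓧.index, counit (R := K) (𝓧.left i) • 𝓧.right i :=
    (Coalgebra.sum_counit_smul 𝓧).symm
  simp only [cocycleL, conv, LinearMap.comp_apply, TensorProduct.comul_tmul, ← 𝓧.eq, ← 𝓨.eq,
    ← 𝓩.eq]
  conv_rhs => rw [hx]
  simp [TensorProduct.sum_tmul, TensorProduct.tmul_sum, Finset.mul_sum, mul_assoc, mul_left_comm]

theorem cocycleR_tmul_tmul (γ : A ⊗[K] A →ₗ[K] K) (x y z : A) :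
    cocycleR (LinearMap.mul' K A) γ (x ⊗ₜ (y ⊗ₜ z)) =
      convPairing γ (γ ∘ₗ (TensorProduct.mk K A A).flip z ∘ₗ LinearMap.mul' K A)
        (comul x) (comul y) := by
  let 𝓧 := ℛ K x
  let 𝓨 := ℛ K y
  let 𝓩 := ℛ K z
  have hz : z = ∑ i ∈ 𝓩.index, counit (R := K) (𝓩.left i) • 𝓩.right i :=
    (Coalgebra.sum_counit_smul 𝓩).symm
  simp only [cocycleR, conv, LinearMap.comp_apply, TensorProduct.comul_tmul, ← 𝓧.eq, ← 𝓨.eq,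
    ← 𝓩.eq]
  conv_rhs => rw [hz]
  simp [TensorProduct.sum_tmul, TensorProduct.tmul_sum, Finset.mul_sum, mul_assoc, mul_left_comm]
  rw [Finset.sum_comm]
  refine Finset.sum_congr rfl fun _ _ => Finset.sum_comm.trans ?_
  exact Finset.sum_congr rfl fun _ _ => Finset.sum_congr rfl fun _ _ => by ring

theorem conv_mul_tmul_mul {f g : A ⊗[K] A →ₗ[K] K} {h h' : A} (hh : IsGroupLikeElem K h)
    (hh' : IsGroupLikeElem K h') (hf : ∀ c b, f ((h * c) ⊗ₜ (b * h')) = f (c ⊗ₜ b))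
    (hg : ∀ c b, g ((h * c) ⊗ₜ (b * h')) = g (c ⊗ₜ b)) (u v : A) :
    conv f g ((h * u) ⊗ₜ (v * h')) = conv f g (u ⊗ₜ v) := by
  rw [conv_tmul, conv_tmul, Bialgebra.comul_mul, Bialgebra.comul_mul, hh.comul_eq_tmul_self,
    hh'.comul_eq_tmul_self, ← (ℛ K u).eq, ← (ℛ K v).eq]
  simp [Finset.mul_sum, Finset.sum_mul, hf, hg]

end Convolution

section SkewCommuting

variable {R S : Type*} [CommSemiring R] [Semiring S] [Algebra R S]

theorem mul_pow_eq_smul_pow_mul {a b : S} {c : R} (h : b * a = c • (a * b)) (k : ℕ) :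
    b * a ^ k = c ^ k • (a ^ k * b) := by
  induction k with
  | zero => simp
  | succ k ih =>
    rw [pow_succ, ← mul_assoc, ih, smul_mul_assoc, mul_assoc, h, mul_smul_comm, smul_smul,
      ← mul_assoc, ← pow_succ, ← pow_succ]

/-- The coefficients are the Gaussian binomials in `c`; only the two extreme ones matter here. -/
theorem exists_add_pow_eq_sum_smul {a b : S} {c : R} (h : a * b = c • (b * a)) (m : ℕ) :
    ∃ coeff : ℕ → R, coeff 0 = 1 ∧ coeff m = 1 ∧
      (a + b) ^ m = ∑ j ∈ Finset.range (m + 1), coeff j • (b ^ j * a ^ (m - j)) := by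
  induction m with
  | zero => exact ⟨fun _ => 1, rfl, rfl, by simp⟩
  | succ m ih =>
    obtain ⟨coeff, h0, hm, hpow⟩ := ih
    refine ⟨fun j => (if j ≤ m then c ^ j * coeff j else 0) + (if j = 0 then 0 else coeff (j - 1)),
      by simp [h0], by simp [hm], ?_⟩
    have hstep : ∀ j ∈ Finset.range (m + 1), (a + b) * coeff j • (b ^ j * a ^ (m - j)) =
        (c ^ j * coeff j) • (b ^ j * a ^ (m + 1 - j)) + coeff j • (b ^ (j + 1) * a ^ (m - j)) := by
      intro j hj
      have hjm : m + 1 - j = m - j + 1 := by have := Finset.mem_range.mp hj; omega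
      rw [add_mul, mul_smul_comm, mul_smul_comm, ← mul_assoc, mul_pow_eq_smul_pow_mul h,
        smul_mul_assoc, mul_assoc, ← pow_succ', hjm, smul_smul, ← mul_assoc, ← pow_succ',
        mul_comm (coeff j)]
    rw [pow_succ', hpow, Finset.mul_sum, Finset.sum_congr rfl hstep, Finset.sum_add_distrib]
    simp only [add_smul, Finset.sum_add_distrib]
    congr 1
    · conv_rhs => rw [Finset.sum_range_succ, if_neg (by omega), zero_smul, add_zero]
      exact Finset.sum_congr rfl fun j hj => by rw [if_pos (by simpa [Nat.lt_succ_iff] using hj)]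
    · conv_rhs => rw [Finset.sum_range_succ', if_pos rfl, zero_smul, add_zero]
      exact Finset.sum_congr rfl fun j hj => by simp

end SkewCommuting

section SkewPrimitive

variable {K A : Type u} [Field K] [Ring A] [Bialgebra K A]

theorem exists_comul_pow_eq_sum {x g : A} {c : K} (hx : comul x = x ⊗ₜ[K] 1 + g ⊗ₜ[K] x)
    (hxg : x * g = c • (g * x)) (m : ℕ) :
    ∃ coeff : ℕ → K, coeff 0 = 1 ∧ coeff m = 1 ∧ comul (R := K) (x ^ m) =
      ∑ j ∈ Finset.range (m + 1), coeff j • ((g ^ j * x ^ (m - j)) ⊗ₜ[K] (x ^ j)) := by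
  have h : (x ⊗ₜ[K] (1 : A)) * (g ⊗ₜ[K] x) = c • ((g ⊗ₜ[K] x) * (x ⊗ₜ[K] (1 : A))) := by
    simp [hxg, TensorProduct.smul_tmul']
  obtain ⟨coeff, h0, hm, hpow⟩ := exists_add_pow_eq_sum_smul h m
  refine ⟨coeff, h0, hm, ?_⟩
  simp [hx, hpow, Algebra.TensorProduct.tmul_pow]

theorem comul_sq_eq {x g : A} {c : K} (hx : comul x = x ⊗ₜ[K] 1 + g ⊗ₜ[K] x)
    (hgx : g * x = c • (x * g)) :
    comul (R := K) (x ^ 2) =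
      (x ^ 2) ⊗ₜ[K] 1 + (1 + c) • ((x * g) ⊗ₜ[K] x) + (g ^ 2) ⊗ₜ[K] (x ^ 2) := by
  rw [sq, Bialgebra.comul_mul, hx]
  simp only [add_mul, mul_add, Algebra.TensorProduct.tmul_mul_tmul, mul_one, one_mul, hgx, add_smul,
    one_smul, ← TensorProduct.smul_tmul', sq]
  abel

end SkewPrimitive

section QuantumPlane

variable {K A : Type u} [Field K] [Ring A] [Bialgebra K A] {Γ : Type*} [Monoid Γ]

/-- The quantum plane of the statement for `r > 2`, with the characters evaluated:
`χ₁(g₁) = χ₁(g₂) = q` and `χ₂(g₁) = q⁻¹`. -/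
structure QuantumPlaneSetting (grp : Γ →* A) (x₁ x₂ : A) (g₁ g₂ : Γ) (r : ℕ) (q a a₁ : K)
    (γ₁ γ₁₂ : A ⊗[K] A →ₗ[K] K) : Prop where
  two_lt : 2 < r
  pow_eq_one : q ^ r = 1
  isGroupLikeElem : ∀ u, IsGroupLikeElem K (grp u)
  comul_x₁ : comul x₁ = x₁ ⊗ₜ[K] 1 + grp g₁ ⊗ₜ[K] x₁
  comul_x₂ : comul x₂ = x₂ ⊗ₜ[K] 1 + grp g₂ ⊗ₜ[K] x₂
  g₁_mul_x₁ : grp g₁ * x₁ = q • (x₁ * grp g₁)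
  g₂_mul_x₁ : grp g₂ * x₁ = q • (x₁ * grp g₂)
  x₂_mul_x₁ : x₂ * x₁ = q • (x₁ * x₂)
  γ₁_invariant : ∀ (u u' : Γ) (c b : A), γ₁ ((grp u * c) ⊗ₜ[K] (b * grp u')) = γ₁ (c ⊗ₜ[K] b)
  γ₁₂_invariant : ∀ (u u' : Γ) (c b : A), γ₁₂ ((grp u * c) ⊗ₜ[K] (b * grp u')) = γ₁₂ (c ⊗ₜ[K] b)
  γ₁_monomial : ∀ n₁ n₂ m₁ m₂ : ℕ, n₁ < r → n₂ < r → m₁ < r → m₂ < r →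
    γ₁ ((x₁ ^ n₁ * x₂ ^ n₂) ⊗ₜ[K] (x₁ ^ m₁ * x₂ ^ m₂)) =
      (if n₁ = 0 ∧ n₂ = 0 ∧ m₁ = 0 ∧ m₂ = 0 then (1 : K) else 0) +
      (if n₂ = 0 ∧ m₂ = 0 ∧ 0 < n₁ ∧ n₁ + m₁ = r then a₁ else 0)
  γ₁₂_monomial : ∀ n₁ n₂ m₁ m₂ : ℕ, n₁ < r → n₂ < r → m₁ < r → m₂ < r →
    γ₁₂ ((x₁ ^ n₁ * x₂ ^ n₂) ⊗ₜ[K] (x₁ ^ m₁ * x₂ ^ m₂)) =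
      (if n₁ = 0 ∧ n₂ = 0 ∧ m₁ = 0 ∧ m₂ = 0 then (1 : K) else 0) +
      (if n₁ = 0 ∧ m₂ = 0 ∧ 0 < n₂ ∧ n₂ = m₁ then qFact q n₂ * a ^ n₂ else 0)

namespace QuantumPlaneSetting

variable {grp : Γ →* A} {x₁ x₂ : A} {g₁ g₂ : Γ} {r : ℕ} {q a a₁ : K} {γ₁ γ₁₂ : A ⊗[K] A →ₗ[K] K}

theorem q_ne_zero (H : QuantumPlaneSetting grp x₁ x₂ g₁ g₂ r q a a₁ γ₁ γ₁₂) : q ≠ 0 := by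
  rintro rfl
  simpa [zero_pow (by have := H.two_lt; omega : r ≠ 0)] using H.pow_eq_one

theorem exists_comul_x₁_pow (H : QuantumPlaneSetting grp x₁ x₂ g₁ g₂ r q a a₁ γ₁ γ₁₂) (m : ℕ) :
    ∃ coeff : ℕ → K, coeff 0 = 1 ∧ coeff m = 1 ∧ comul (R := K) (x₁ ^ m) =
      ∑ j ∈ Finset.range (m + 1), coeff j • ((grp g₁ ^ j * x₁ ^ (m - j)) ⊗ₜ[K] (x₁ ^ j)) := by
  refine exists_comul_pow_eq_sum H.comul_x₁ (c := q⁻¹) ?_ m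
  rw [H.g₁_mul_x₁, smul_smul, inv_mul_cancel₀ H.q_ne_zero, one_smul]

theorem comul_x₁_sq (H : QuantumPlaneSetting grp x₁ x₂ g₁ g₂ r q a a₁ γ₁ γ₁₂) :
    comul (R := K) (x₁ ^ 2) = (x₁ ^ 2) ⊗ₜ[K] 1 + (1 + q) • ((x₁ * grp g₁) ⊗ₜ[K] x₁) +
      (grp g₁ ^ 2) ⊗ₜ[K] (x₁ ^ 2) :=
  comul_sq_eq H.comul_x₁ H.g₁_mul_x₁

theorem x₁_pow_mul_g₂ (H : QuantumPlaneSetting grp x₁ x₂ g₁ g₂ r q a a₁ γ₁ γ₁₂) :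
    x₁ ^ (r - 1) * grp g₂ = q • (grp g₂ * x₁ ^ (r - 1)) := by
  have hq : q * q ^ (r - 1) = 1 := by
    rw [← pow_succ', Nat.sub_add_cancel (by have := H.two_lt; omega), H.pow_eq_one]
  rw [mul_pow_eq_smul_pow_mul H.g₂_mul_x₁, smul_smul, hq, one_smul]

theorem conv_grp_mul_tmul_mul_grp (H : QuantumPlaneSetting grp x₁ x₂ g₁ g₂ r q a a₁ γ₁ γ₁₂)
    (u u' : Γ) (c b : A) :
    conv γ₁ γ₁₂ ((grp u * c) ⊗ₜ[K] (b * grp u')) = conv γ₁ γ₁₂ (c ⊗ₜ[K] b) :=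
  conv_mul_tmul_mul (H.isGroupLikeElem u) (H.isGroupLikeElem u') (H.γ₁_invariant u u')
    (H.γ₁₂_invariant u u') c b

theorem conv_grp_mul_tmul (H : QuantumPlaneSetting grp x₁ x₂ g₁ g₂ r q a a₁ γ₁ γ₁₂) (u : Γ)
    (c b : A) : conv γ₁ γ₁₂ ((grp u * c) ⊗ₜ[K] b) = conv γ₁ γ₁₂ (c ⊗ₜ[K] b) := by
  simpa using H.conv_grp_mul_tmul_mul_grp u 1 c b

theorem conv_tmul_mul_grp (H : QuantumPlaneSetting grp x₁ x₂ g₁ g₂ r q a a₁ γ₁ γ₁₂) (u : Γ)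
    (c b : A) : conv γ₁ γ₁₂ (c ⊗ₜ[K] (b * grp u)) = conv γ₁ γ₁₂ (c ⊗ₜ[K] b) := by
  simpa using H.conv_grp_mul_tmul_mul_grp 1 u c b

theorem γ₁_apply (H : QuantumPlaneSetting grp x₁ x₂ g₁ g₂ r q a a₁ γ₁ γ₁₂) (u u' : Γ)
    (n₁ n₂ m₁ m₂ : ℕ) (h₁ : n₁ < r := by omega) (h₂ : n₂ < r := by omega)
    (h₃ : m₁ < r := by omega) (h₄ : m₂ < r := by omega) :
    γ₁ ((grp u * (x₁ ^ n₁ * x₂ ^ n₂)) ⊗ₜ[K] (x₁ ^ m₁ * x₂ ^ m₂ * grp u')) =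
      (if n₁ = 0 ∧ n₂ = 0 ∧ m₁ = 0 ∧ m₂ = 0 then (1 : K) else 0) +
      (if n₂ = 0 ∧ m₂ = 0 ∧ 0 < n₁ ∧ n₁ + m₁ = r then a₁ else 0) := by
  rw [H.γ₁_invariant, H.γ₁_monomial _ _ _ _ h₁ h₂ h₃ h₄]

theorem γ₁₂_apply (H : QuantumPlaneSetting grp x₁ x₂ g₁ g₂ r q a a₁ γ₁ γ₁₂) (u u' : Γ)
    (n₁ n₂ m₁ m₂ : ℕ) (h₁ : n₁ < r := by omega) (h₂ : n₂ < r := by omega)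
    (h₃ : m₁ < r := by omega) (h₄ : m₂ < r := by omega) :
    γ₁₂ ((grp u * (x₁ ^ n₁ * x₂ ^ n₂)) ⊗ₜ[K] (x₁ ^ m₁ * x₂ ^ m₂ * grp u')) =
      (if n₁ = 0 ∧ n₂ = 0 ∧ m₁ = 0 ∧ m₂ = 0 then (1 : K) else 0) +
      (if n₁ = 0 ∧ m₂ = 0 ∧ 0 < n₂ ∧ n₂ = m₁ then qFact q n₂ * a ^ n₂ else 0) := by
  rw [H.γ₁₂_invariant, H.γ₁₂_monomial _ _ _ _ h₁ h₂ h₃ h₄]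

theorem conv_one_tmul_one (H : QuantumPlaneSetting grp x₁ x₂ g₁ g₂ r q a a₁ γ₁ γ₁₂) :
    conv γ₁ γ₁₂ ((1 : A) ⊗ₜ[K] (1 : A)) = 1 := by
  have hr := H.two_lt
  have e₁ := H.γ₁_apply 1 1 0 0 0 0
  have e₂ := H.γ₁₂_apply 1 1 0 0 0 0
  simp at e₁ e₂
  simp [conv_tmul, Algebra.TensorProduct.one_def, e₁, e₂]

theorem conv_x₁_pow_tmul_one (H : QuantumPlaneSetting grp x₁ x₂ g₁ g₂ r q a a₁ γ₁ γ₁₂) {m : ℕ}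
    (hm₀ : 0 < m) (hm : m < r) : conv γ₁ γ₁₂ ((x₁ ^ m) ⊗ₜ[K] (1 : A)) = 0 := by
  obtain ⟨c, -, -, hc⟩ := H.exists_comul_x₁_pow m
  rw [conv_tmul, hc, Bialgebra.comul_one, Algebra.TensorProduct.one_def]
  simp only [map_sum, map_smul, LinearMap.sum_apply, LinearMap.smul_apply,
    convPairing_tmul_tmul]
  refine Finset.sum_eq_zero fun j hj => ?_
  have hj := Finset.mem_range.mp hj
  rcases Nat.eq_zero_or_pos j with rfl | hj₀
  · have e := H.γ₁_apply 1 1 m 0 0 0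
    simp [hm₀.ne', hm.ne] at e
    simp [e]
  · have e := H.γ₁₂_apply 1 1 j 0 0 0
    simp [hj₀.ne'] at e
    simp [e]

theorem conv_x₂_tmul_one (H : QuantumPlaneSetting grp x₁ x₂ g₁ g₂ r q a a₁ γ₁ γ₁₂) :
    conv γ₁ γ₁₂ (x₂ ⊗ₜ[K] (1 : A)) = 0 := by
  have hr := H.two_lt
  have e₁ := H.γ₁_apply 1 1 0 1 0 0
  have e₂ := H.γ₁₂_apply 1 1 0 1 0 0
  simp at e₁ e₂
  simp [conv_tmul, H.comul_x₂, Algebra.TensorProduct.one_def, e₁, e₂]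

theorem conv_one_tmul_x₁_pow (H : QuantumPlaneSetting grp x₁ x₂ g₁ g₂ r q a a₁ γ₁ γ₁₂) {m : ℕ}
    (hm₀ : 0 < m) (hm : m < r) : conv γ₁ γ₁₂ ((1 : A) ⊗ₜ[K] (x₁ ^ m)) = 0 := by
  obtain ⟨c, -, -, hc⟩ := H.exists_comul_x₁_pow m
  rw [conv_tmul, hc, Bialgebra.comul_one, Algebra.TensorProduct.one_def]
  simp only [map_sum, map_smul, convPairing_tmul_tmul]
  refine Finset.sum_eq_zero fun j hj => ?_
  have hj := Finset.mem_range.mp hj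
  rcases Nat.eq_zero_or_pos j with rfl | hj₀
  · have e := H.γ₁_apply 1 1 0 0 m 0
    simp [hm₀.ne'] at e
    simp [e]
  · have e := H.γ₁₂_apply 1 1 0 0 j 0
    simp [hj₀.ne'] at e
    simp [e]

theorem conv_x₂_tmul_x₁ (H : QuantumPlaneSetting grp x₁ x₂ g₁ g₂ r q a a₁ γ₁ γ₁₂) :
    conv γ₁ γ₁₂ (x₂ ⊗ₜ[K] x₁) = a := by
  have hr := H.two_lt
  have e₁ := H.γ₁_apply 1 1 0 1 1 0
  have e₂ := H.γ₁_apply g₂ g₁ 0 0 0 0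
  have e₃ := H.γ₁₂_apply 1 1 0 0 0 0
  have e₄ := H.γ₁₂_apply 1 1 0 0 1 0
  have e₅ := H.γ₁₂_apply 1 1 0 1 0 0
  have e₆ := H.γ₁₂_apply 1 1 0 1 1 0
  simp [qFact] at e₁ e₂ e₃ e₄ e₅ e₆
  simp [conv_tmul, H.comul_x₁, H.comul_x₂, e₁, e₂, e₃, e₄, e₅, e₆]

theorem conv_x₁_pow_tmul_x₁ (H : QuantumPlaneSetting grp x₁ x₂ g₁ g₂ r q a a₁ γ₁ γ₁₂) :
    conv γ₁ γ₁₂ ((x₁ ^ (r - 1)) ⊗ₜ[K] x₁) = a₁ := by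
  have hr := H.two_lt
  obtain ⟨c, hc₀, -, hc⟩ := H.exists_comul_x₁_pow (r - 1)
  rw [conv_tmul, hc, H.comul_x₁]
  simp only [map_sum, map_smul, LinearMap.sum_apply, LinearMap.smul_apply]
  rw [Finset.sum_eq_single 0]
  · have e₁ := H.γ₁_apply 1 1 (r - 1) 0 1 0
    have e₂ := H.γ₁₂_apply 1 1 0 0 0 0
    have e₃ := H.γ₁₂_apply 1 1 0 0 1 0
    simp [show r - 1 ≠ 0 by omega, show 0 < r - 1 by omega, Nat.sub_add_cancel (by omega : 1 ≤ r)]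
      at e₁
    simp at e₂ e₃
    simp [hc₀, e₁, e₂, e₃]
  · intro j hj hj₀
    have hj := Finset.mem_range.mp hj
    have e₁ := H.γ₁₂_apply 1 1 j 0 0 0
    have e₂ := H.γ₁₂_apply 1 1 j 0 1 0
    simp [hj₀] at e₁ e₂
    simp [e₁, e₂]
  · simp

theorem conv_x₁_pow_tmul_x₂ (H : QuantumPlaneSetting grp x₁ x₂ g₁ g₂ r q a a₁ γ₁ γ₁₂) {m : ℕ}
    (hm : m < r) : conv γ₁ γ₁₂ ((x₁ ^ m) ⊗ₜ[K] x₂) = 0 := by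
  have hr := H.two_lt
  obtain ⟨c, -, -, hc⟩ := H.exists_comul_x₁_pow m
  rw [conv_tmul, hc, H.comul_x₂]
  simp only [map_sum, map_smul, LinearMap.sum_apply, LinearMap.smul_apply]
  refine Finset.sum_eq_zero fun j hj => ?_
  have hj := Finset.mem_range.mp hj
  have e₁ := H.γ₁_apply (g₁ ^ j) 1 (m - j) 0 0 1
  have e₂ := H.γ₁₂_apply 1 1 j 0 0 1
  simp at e₁ e₂
  simp [e₁, e₂]

theorem conv_x₁_pow_tmul_x₁_sq_mul_x₂ (H : QuantumPlaneSetting grp x₁ x₂ g₁ g₂ r q a a₁ γ₁ γ₁₂)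
    {m : ℕ} (hm : m < r) : conv γ₁ γ₁₂ ((x₁ ^ m) ⊗ₜ[K] (x₁ ^ 2 * x₂)) = 0 := by
  have hr := H.two_lt
  obtain ⟨c, -, -, hc⟩ := H.exists_comul_x₁_pow m
  rw [conv_tmul, hc, Bialgebra.comul_mul, H.comul_x₁_sq, H.comul_x₂]
  simp only [map_sum, map_smul, LinearMap.sum_apply, LinearMap.smul_apply]
  refine Finset.sum_eq_zero fun j hj => ?_
  have hj := Finset.mem_range.mp hj
  have e₁ := H.γ₁_apply (g₁ ^ j) 1 (m - j) 0 2 1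
  have e₂ := H.γ₁₂_apply 1 1 j 0 0 1
  have e₃ := H.γ₁₂_apply 1 1 j 0 1 0
  have e₄ := H.γ₁₂_apply 1 1 j 0 1 1
  have e₅ := H.γ₁₂_apply 1 1 j 0 2 0
  have e₆ := H.γ₁₂_apply 1 1 j 0 2 1
  simp at e₁ e₂ e₃ e₄ e₅ e₆
  simp [add_mul, mul_add, e₁, e₂, e₃, e₄, e₅, e₆]

theorem conv_x₁_pow_mul_x₂_tmul_x₁_sq
    (H : QuantumPlaneSetting grp x₁ x₂ g₁ g₂ r q a a₁ γ₁ γ₁₂) :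
    conv γ₁ γ₁₂ ((x₁ ^ (r - 1) * x₂) ⊗ₜ[K] (x₁ ^ 2)) = q * ((q + 1) * a * a₁) := by
  have hr := H.two_lt
  obtain ⟨c, hc₀, -, hc⟩ := H.exists_comul_x₁_pow (r - 1)
  rw [conv_tmul, Bialgebra.comul_mul, hc, H.comul_x₂, H.comul_x₁_sq, Finset.sum_mul]
  simp only [map_sum, LinearMap.sum_apply]
  rw [Finset.sum_eq_single 0]
  · have e₁ := H.γ₁_apply 1 1 (r - 1) 1 2 0
    have e₂ := H.γ₁_apply g₂ g₁ (r - 1) 0 1 0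
    have e₃ := H.γ₁₂_apply 1 1 0 0 0 0
    have e₄ := H.γ₁₂_apply 1 1 0 0 1 0
    have e₅ := H.γ₁₂_apply 1 1 0 0 2 0
    have e₆ := H.γ₁₂_apply 1 1 0 1 0 0
    have e₇ := H.γ₁₂_apply 1 1 0 1 1 0
    have e₈ := H.γ₁₂_apply 1 1 0 1 2 0
    simp [show r - 1 ≠ 0 by omega, show 0 < r - 1 by omega, Nat.sub_add_cancel (by omega : 1 ≤ r)]
      at e₁ e₂
    simp [qFact] at e₃ e₄ e₅ e₆ e₇ e₈
    simp [hc₀, add_mul, mul_add, H.x₁_pow_mul_g₂, ← TensorProduct.smul_tmul', e₁, e₂, e₃, e₄, e₅,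
      e₆, e₇, e₈]
    ring
  · intro j hj hj₀
    have hj := Finset.mem_range.mp hj
    have e₁ := H.γ₁₂_apply 1 1 j 0 0 0
    have e₂ := H.γ₁₂_apply 1 1 j 0 1 0
    have e₃ := H.γ₁₂_apply 1 1 j 0 2 0
    have e₄ := H.γ₁₂_apply 1 1 j 1 0 0
    have e₅ := H.γ₁₂_apply 1 1 j 1 1 0
    have e₆ := H.γ₁₂_apply 1 1 j 1 2 0
    simp [hj₀] at e₁ e₂ e₃ e₄ e₅ e₆
    simp [mul_add, e₁, e₂, e₃, e₄, e₅, e₆]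
  · simp

theorem cocycleL_apply (H : QuantumPlaneSetting grp x₁ x₂ g₁ g₂ r q a a₁ γ₁ γ₁₂) :
    cocycleL (LinearMap.mul' K A) (conv γ₁ γ₁₂) ((x₁ ^ (r - 1)) ⊗ₜ[K] (x₂ ⊗ₜ[K] (x₁ ^ 2))) =
      (q + 1) * a * a₁ := by
  have hr := H.two_lt
  have h₁ : conv γ₁ γ₁₂ (x₂ ⊗ₜ[K] (x₁ * grp g₁)) = a := by
    rw [H.conv_tmul_mul_grp, H.conv_x₂_tmul_x₁]
  have h₂ : conv γ₁ γ₁₂ (x₂ ⊗ₜ[K] (grp g₁ ^ 2)) = 0 := by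
    rw [← map_pow, ← one_mul (grp _), H.conv_tmul_mul_grp, H.conv_x₂_tmul_one]
  have h₃ : conv γ₁ γ₁₂ (grp g₂ ⊗ₜ[K] (x₁ ^ 2)) = 0 := by
    rw [← mul_one (grp g₂), H.conv_grp_mul_tmul, H.conv_one_tmul_x₁_pow two_pos hr]
  have h₄ : conv γ₁ γ₁₂ (grp g₂ ⊗ₜ[K] (x₁ * grp g₁)) = 0 := by
    rw [← mul_one (grp g₂), H.conv_grp_mul_tmul, H.conv_tmul_mul_grp, ← pow_one x₁,
      H.conv_one_tmul_x₁_pow one_pos (by omega)]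
  have h₅ : conv γ₁ γ₁₂ (grp g₂ ⊗ₜ[K] (grp g₁ ^ 2)) = 1 := by
    rw [← mul_one (grp g₂), ← map_pow, ← one_mul (grp (g₁ ^ 2)), H.conv_grp_mul_tmul,
      H.conv_tmul_mul_grp, H.conv_one_tmul_one]
  rw [cocycleL_tmul_tmul, H.comul_x₂, H.comul_x₁_sq]
  simp only [map_add, map_smul, LinearMap.add_apply, convPairing_tmul_tmul, LinearMap.comp_apply,
    TensorProduct.mk_apply, LinearMap.mul'_apply, mul_one, one_mul]
  rw [mul_pow_eq_smul_pow_mul H.x₂_mul_x₁, TensorProduct.tmul_smul, map_smul,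
    H.conv_x₁_pow_tmul_x₁_sq_mul_x₂ (by omega), H.conv_x₁_pow_tmul_one (by omega) (by omega),
    H.conv_x₁_pow_tmul_x₁, h₁, h₂, h₃, h₄, h₅]
  simp only [zero_mul, mul_zero, smul_eq_mul, add_zero, zero_add]
  ring

theorem cocycleR_apply (H : QuantumPlaneSetting grp x₁ x₂ g₁ g₂ r q a a₁ γ₁ γ₁₂) :
    cocycleR (LinearMap.mul' K A) (conv γ₁ γ₁₂) ((x₁ ^ (r - 1)) ⊗ₜ[K] (x₂ ⊗ₜ[K] (x₁ ^ 2))) =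
      q * ((q + 1) * a * a₁) := by
  have hr := H.two_lt
  have hx₂ : ∀ j ≤ r - 1, conv γ₁ γ₁₂ ((grp g₁ ^ j * x₁ ^ (r - 1 - j)) ⊗ₜ[K] x₂) = 0 := by
    intro j hj
    rw [← map_pow, H.conv_grp_mul_tmul, H.conv_x₁_pow_tmul_x₂ (by omega)]
  have hg₂ : ∀ j < r - 1, conv γ₁ γ₁₂ ((grp g₁ ^ j * x₁ ^ (r - 1 - j)) ⊗ₜ[K] grp g₂) = 0 := by
    intro j hj
    rw [← map_pow, H.conv_grp_mul_tmul, ← one_mul (grp g₂), H.conv_tmul_mul_grp,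
      H.conv_x₁_pow_tmul_one (by omega) (by omega)]
  have hg₂' : conv γ₁ γ₁₂ ((grp g₁ ^ (r - 1)) ⊗ₜ[K] grp g₂) = 1 := by
    rw [← map_pow, ← mul_one (grp (g₁ ^ (r - 1))), ← one_mul (grp g₂), H.conv_grp_mul_tmul,
      H.conv_tmul_mul_grp, H.conv_one_tmul_one]
  obtain ⟨c, -, hc, hΔ⟩ := H.exists_comul_x₁_pow (r - 1)
  rw [cocycleR_tmul_tmul, hΔ, H.comul_x₂]
  simp only [map_sum, map_smul, map_add, LinearMap.sum_apply, LinearMap.smul_apply,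
    convPairing_tmul_tmul, LinearMap.comp_apply, LinearMap.flip_apply, TensorProduct.mk_apply,
    LinearMap.mul'_apply]
  rw [Finset.sum_eq_zero fun j hj => by
      rw [hx₂ j (Nat.lt_succ_iff.mp (Finset.mem_range.mp hj)), zero_mul, smul_zero],
    zero_add, Finset.sum_eq_single (r - 1)]
  · rw [Nat.sub_self, pow_zero, mul_one, hg₂', hc, H.conv_x₁_pow_mul_x₂_tmul_x₁_sq, one_mul,
      one_smul]
  · intro j hj hjn
    rw [hg₂ j (by have := Finset.mem_range.mp hj; omega), zero_mul, smul_zero]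
  · simp

end QuantumPlaneSetting

end QuantumPlane

theorem stmt14_general {Γ : Type u} [CommGroup Γ] (grp : Γ →* A)
    (hgrp : ∀ u : Γ, Coalgebra.comul (R := K) (grp u) = grp u ⊗ₜ[K] grp u ∧
      Coalgebra.counit (R := K) (grp u) = 1)
    (x₁ x₂ : A) (g₁ g₂ : Γ) (χ₁ χ₂ : Γ →* K) (r : ℕ) (hr : 1 < r)
    (hx₁prim : Coalgebra.comul (R := K) x₁ = x₁ ⊗ₜ[K] (1 : A) + grp g₁ ⊗ₜ[K] x₁)
    (hx₂prim : Coalgebra.comul (R := K) x₂ = x₂ ⊗ₜ[K] (1 : A) + grp g₂ ⊗ₜ[K] x₂)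
    (hcomm₁ : ∀ u : Γ, grp u * x₁ = χ₁ u • (x₁ * grp u))
    (hcompat : χ₁ g₂ * χ₂ g₁ = 1) (htriv : χ₁ * χ₂ = 1)
    (q : K) (hq : q = χ₁ g₁) (hprim : IsPrimitiveRoot q r)
    (hbraid : x₁ * x₂ = χ₂ g₁ • (x₂ * x₁))
    (hnil₁ : x₁ ^ r = 0)
    (a a₁ : K)
    (γ₁ γ₁₂ : A ⊗[K] A →ₗ[K] K)
    (hbil₁ : ∀ (u u' : Γ) (c b : A), γ₁ ((grp u * c) ⊗ₜ[K] (b * grp u')) = γ₁ (c ⊗ₜ[K] b))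
    (hbil₁₂ : ∀ (u u' : Γ) (c b : A),
      γ₁₂ ((grp u * c) ⊗ₜ[K] (b * grp u')) = γ₁₂ (c ⊗ₜ[K] b))
    (hval₁ : ∀ n₁ n₂ m₁ m₂ : ℕ, n₁ < r → n₂ < r → m₁ < r → m₂ < r →
      γ₁ ((x₁ ^ n₁ * x₂ ^ n₂) ⊗ₜ[K] (x₁ ^ m₁ * x₂ ^ m₂)) =
        (if n₁ = 0 ∧ n₂ = 0 ∧ m₁ = 0 ∧ m₂ = 0 then (1 : K) else 0) +
        (if n₂ = 0 ∧ m₂ = 0 ∧ 0 < n₁ ∧ n₁ + m₁ = r then a₁ else 0))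
    (hval₁₂ : ∀ n₁ n₂ m₁ m₂ : ℕ, n₁ < r → n₂ < r → m₁ < r → m₂ < r →
      γ₁₂ ((x₁ ^ n₁ * x₂ ^ n₂) ⊗ₜ[K] (x₁ ^ m₁ * x₂ ^ m₂)) =
        (if n₁ = 0 ∧ n₂ = 0 ∧ m₁ = 0 ∧ m₂ = 0 then (1 : K) else 0) +
        (if n₁ = 0 ∧ m₂ = 0 ∧ 0 < n₂ ∧ n₂ = m₁ then qFact q n₂ * a ^ n₂ else 0)) :
    cocycleL (LinearMap.mul' K A) (conv γ₁ γ₁₂)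
        ((x₁ ^ (r - 1)) ⊗ₜ[K] (x₂ ⊗ₜ[K] (x₁ ^ 2))) = (q + 1) * a * a₁ ∧
    cocycleR (LinearMap.mul' K A) (conv γ₁ γ₁₂)
        ((x₁ ^ (r - 1)) ⊗ₜ[K] (x₂ ⊗ₜ[K] (x₁ ^ 2))) = q * ((q + 1) * a * a₁) ∧
    (q ≠ 1 → (q + 1) * a * a₁ ≠ 0 →
      cocycleL (LinearMap.mul' K A) (conv γ₁ γ₁₂)
          ((x₁ ^ (r - 1)) ⊗ₜ[K] (x₂ ⊗ₜ[K] (x₁ ^ 2))) ≠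
        cocycleR (LinearMap.mul' K A) (conv γ₁ γ₁₂)
          ((x₁ ^ (r - 1)) ⊗ₜ[K] (x₂ ⊗ₜ[K] (x₁ ^ 2)))) := by
  rcases (show r = 2 ∨ 2 < r by omega) with rfl | hr₂
  · have hX : (q + 1) * a * a₁ = 0 := by rw [hprim.eq_neg_one_of_two_right]; ring
    simp [hnil₁, hX]
  have hχ : ∀ u, χ₁ u * χ₂ u = 1 := fun u => by simpa using congrArg (· u) htriv
  have hq₀ : q ≠ 0 := hprim.ne_zero (by omega)
  have hχ₂g₁ : χ₂ g₁ = q⁻¹ := eq_inv_of_mul_eq_one_right (hq ▸ hχ g₁)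
  have hχ₁g₂ : χ₁ g₂ = q := by
    rw [hχ₂g₁] at hcompat
    exact (mul_inv_eq_one₀ hq₀).mp hcompat
  have H : QuantumPlaneSetting grp x₁ x₂ g₁ g₂ r q a a₁ γ₁ γ₁₂ :=
    { two_lt := hr₂
      pow_eq_one := hprim.pow_eq_one
      isGroupLikeElem := fun u => ⟨(hgrp u).2, (hgrp u).1⟩
      comul_x₁ := hx₁prim
      comul_x₂ := hx₂prim
      g₁_mul_x₁ := hq ▸ hcomm₁ g₁
      g₂_mul_x₁ := hχ₁g₂ ▸ hcomm₁ g₂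
      x₂_mul_x₁ := by rw [hbraid, hχ₂g₁, smul_smul, mul_inv_cancel₀ hq₀, one_smul]
      γ₁_invariant := hbil₁
      γ₁₂_invariant := hbil₁₂
      γ₁_monomial := hval₁
      γ₁₂_monomial := hval₁₂ }
  refine ⟨H.cocycleL_apply, H.cocycleR_apply, fun hq₁ hX h => hq₁ ?_⟩
  rw [H.cocycleL_apply, H.cocycleR_apply] at h
  exact mul_right_cancel₀ hX (by rw [one_mul]; exact h.symm)

/-- Let `V` be a quantum plane with `χ₁χ₂ = ε`, `a = a₁₂ ≠ 0`,
`r = r₁ = r₂`, `q = χ₁(g₁)`.  Then `γ₁ ∗ γ₁₂` fails the 2-cocycle condition on the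
triple `(x₁^{r−1}, x₂, x₁²)` whenever `q ≠ 1` and `a a₁ (q+1) ≠ 0`: the left-hand side
of the cocycle identity equals `(q+1) a a₁` while the right-hand side equals
`q(q+1) a a₁`. -/
theorem stmt14 {Γ : Type u} [CommGroup Γ] [Fintype Γ] (grp : Γ →* A)
    (hgrp : ∀ u : Γ, Coalgebra.comul (R := K) (grp u) = grp u ⊗ₜ[K] grp u ∧
      Coalgebra.counit (R := K) (grp u) = 1)
    (x₁ x₂ : A) (g₁ g₂ : Γ) (χ₁ χ₂ : Γ →* K) (r : ℕ) (hr : 1 < r)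
    (hx₁prim : Coalgebra.comul (R := K) x₁ = x₁ ⊗ₜ[K] (1 : A) + grp g₁ ⊗ₜ[K] x₁)
    (hx₂prim : Coalgebra.comul (R := K) x₂ = x₂ ⊗ₜ[K] (1 : A) + grp g₂ ⊗ₜ[K] x₂)
    (hcnt₁ : Coalgebra.counit (R := K) x₁ = 0)
    (hcnt₂ : Coalgebra.counit (R := K) x₂ = 0)
    (hcomm₁ : ∀ u : Γ, grp u * x₁ = χ₁ u • (x₁ * grp u))
    (hcomm₂ : ∀ u : Γ, grp u * x₂ = χ₂ u • (x₂ * grp u))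
    (hcompat : χ₁ g₂ * χ₂ g₁ = 1) (htriv : χ₁ * χ₂ = 1)
    (q : K) (hq : q = χ₁ g₁) (hprim : IsPrimitiveRoot q r)
    (hbraid : x₁ * x₂ = χ₂ g₁ • (x₂ * x₁))
    (hnil₁ : x₁ ^ r = 0) (hnil₂ : x₂ ^ r = 0)
    (a a₁ : K) (ha : a ≠ 0)
    (γ₁ γ₁₂ : A ⊗[K] A →ₗ[K] K)
    (hbil₁ : ∀ (u u' : Γ) (c b : A), γ₁ ((grp u * c) ⊗ₜ[K] (b * grp u')) = γ₁ (c ⊗ₜ[K] b))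
    (hbil₁₂ : ∀ (u u' : Γ) (c b : A),
      γ₁₂ ((grp u * c) ⊗ₜ[K] (b * grp u')) = γ₁₂ (c ⊗ₜ[K] b))
    (hval₁ : ∀ n₁ n₂ m₁ m₂ : ℕ, n₁ < r → n₂ < r → m₁ < r → m₂ < r →
      γ₁ ((x₁ ^ n₁ * x₂ ^ n₂) ⊗ₜ[K] (x₁ ^ m₁ * x₂ ^ m₂)) =
        (if n₁ = 0 ∧ n₂ = 0 ∧ m₁ = 0 ∧ m₂ = 0 then (1 : K) else 0) +
        (if n₂ = 0 ∧ m₂ = 0 ∧ 0 < n₁ ∧ n₁ + m₁ = r then a₁ else 0))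
    (hval₁₂ : ∀ n₁ n₂ m₁ m₂ : ℕ, n₁ < r → n₂ < r → m₁ < r → m₂ < r →
      γ₁₂ ((x₁ ^ n₁ * x₂ ^ n₂) ⊗ₜ[K] (x₁ ^ m₁ * x₂ ^ m₂)) =
        (if n₁ = 0 ∧ n₂ = 0 ∧ m₁ = 0 ∧ m₂ = 0 then (1 : K) else 0) +
        (if n₁ = 0 ∧ m₂ = 0 ∧ 0 < n₂ ∧ n₂ = m₁ then qFact q n₂ * a ^ n₂ else 0)) :
    cocycleL (LinearMap.mul' K A) (conv γ₁ γ₁₂)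
        ((x₁ ^ (r - 1)) ⊗ₜ[K] (x₂ ⊗ₜ[K] (x₁ ^ 2))) = (q + 1) * a * a₁ ∧
    cocycleR (LinearMap.mul' K A) (conv γ₁ γ₁₂)
        ((x₁ ^ (r - 1)) ⊗ₜ[K] (x₂ ⊗ₜ[K] (x₁ ^ 2))) = q * ((q + 1) * a * a₁) ∧
    (q ≠ 1 → (q + 1) * a * a₁ ≠ 0 →
      cocycleL (LinearMap.mul' K A) (conv γ₁ γ₁₂)
          ((x₁ ^ (r - 1)) ⊗ₜ[K] (x₂ ⊗ₜ[K] (x₁ ^ 2))) ≠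
        cocycleR (LinearMap.mul' K A) (conv γ₁ γ₁₂)
          ((x₁ ^ (r - 1)) ⊗ₜ[K] (x₂ ⊗ₜ[K] (x₁ ^ 2)))) :=
  stmt14_general grp hgrp x₁ x₂ g₁ g₂ χ₁ χ₂ r hr hx₁prim hx₂prim hcomm₁ hcompat htriv q hq hprim
    hbraid hnil₁ a a₁ γ₁ γ₁₂ hbil₁ hbil₁₂ hval₁ hval₁₂
end
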